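/- arXiv:2505.01872 — 5 statements merged into one kernel-verified Lean document; each statement's English description precedes it below -/
import Mathlib

section
/- For every integer n ≥ 3, every chain of the arc set F_n of the minority cube \hat Q_n contains at most 2 arcs; moreover, the chains of length 2 are exactly the directed paths 00a → 10a → 11a where a ranges over all bit strings of length n-2 (i.e., for every such a both (00a,10a) and (10a,11a) lie in F_n and form a chain, and every chain of F_n with two arcs is of this form). -/
/-! ## Bit-string vertices -/

/-- The bit string of length `n` whose ones are exactly at the positions in `s`. -/
def oneAt (n : ℕ) (s : List ℕ) : Fin n → Bool := fun i => decide (i.val ∈ s)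

/-- The vertex `01 0^{n-4} 0 0`. -/
def vA (n : ℕ) : Fin n → Bool := oneAt n [1]
/-- The vertex `01 0^{n-4} 0 1`. -/
def vB (n : ℕ) : Fin n → Bool := oneAt n [1, n-1]
/-- The vertex `10 0^{n-4} 1 0`. -/
def vC (n : ℕ) : Fin n → Bool := oneAt n [0, n-2]
/-- The vertex `10 0^{n-4} 1 1`. -/
def vD (n : ℕ) : Fin n → Bool := oneAt n [0, n-2, n-1]
/-- The tail `01 0^{n-4} 1 0` of the bridge arc. -/
def bridgeTail (n : ℕ) : Fin n → Bool := oneAt n [1, n-2]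
/-- The head `01 0^{n-4} 1 1` of the bridge arc. -/
def bridgeHead (n : ℕ) : Fin n → Bool := oneAt n [1, n-2, n-1]

/-! ## The minority cube -/

/-- The matching joining the two copies of `\hat Q_n` in the construction of the
minority cube `\hat Q_{n+1}`: the standard matching (vertices differing only in
the last bit), except that the standard edges `vA–vB` and `vC–vD` are replaced by
the twisted edges `vA–vD` and `vC–vB`. -/
def matchRel (n : ℕ) (u v : Fin (n+1) → Bool) : Prop :=
  (Fin.init u = Fin.init v ∧ u (Fin.last n) ≠ v (Fin.last n) ∧
    ({u, v} : Set (Fin (n+1) → Bool)) ≠ {vA (n+1), vB (n+1)} ∧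
    ({u, v} : Set (Fin (n+1) → Bool)) ≠ {vC (n+1), vD (n+1)}) ∨
  ({u, v} : Set (Fin (n+1) → Bool)) = {vA (n+1), vD (n+1)} ∨
  ({u, v} : Set (Fin (n+1) → Bool)) = {vC (n+1), vB (n+1)}

/-- Hypercube adjacency: differ in exactly one position. -/
def cubeRel (n : ℕ) (u v : Fin n → Bool) : Prop := ∃! i, u i ≠ v i

/-- The adjacency relation of the minority cube `\hat Q_n`: for `n ≤ 3` it is the
hypercube `Q_n`; for `n ≥ 4` two vertices are adjacent if they lie in the same copy
of `\hat Q_{n-1}` (same last bit) and are adjacent there, or they are joined by the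
matching between the copies. -/
def minRel : (n : ℕ) → (Fin n → Bool) → (Fin n → Bool) → Prop
  | 0 => cubeRel 0
  | 1 => cubeRel 1
  | 2 => cubeRel 2
  | 3 => cubeRel 3
  | (n+4) => fun u v =>
      (u (Fin.last (n+3)) = v (Fin.last (n+3)) ∧
        minRel (n+3) (Fin.init u) (Fin.init v)) ∨ matchRel (n+3) u v

/-- The minority cube `\hat Q_n` as a simple graph on `{0,1}^n`. -/
def hatQ (n : ℕ) : SimpleGraph (Fin n → Bool) := SimpleGraph.fromRel (minRel n)

/-- Append the bit `b` to both coordinates of a pair of bit strings. -/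
def snocPair {n : ℕ} (p : (Fin n → Bool) × (Fin n → Bool)) (b : Bool) :
    (Fin (n+1) → Bool) × (Fin (n+1) → Bool) := (Fin.snoc p.1 b, Fin.snoc p.2 b)

/-- The arc set `F_n` of the minority cube: `F_3` consists of the four arcs
`000→100, 100→110, 001→101, 101→111`; and `F_{n+1}` is the union of the two copies of
`F_n` (labels extended by the appended bit) together with the bridge arc
`01 0^{n-3} 1 0 → 01 0^{n-3} 1 1`. -/
def minF : (n : ℕ) → Set ((Fin n → Bool) × (Fin n → Bool))
  | 0 => ∅
  | 1 => ∅
  | 2 => ∅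
  | 3 => {(oneAt 3 [], oneAt 3 [0]), (oneAt 3 [0], oneAt 3 [0,1]),
          (oneAt 3 [2], oneAt 3 [0,2]), (oneAt 3 [0,2], oneAt 3 [0,1,2])}
  | (n+4) => (⋃ b : Bool, (fun p => snocPair p b) '' minF (n+3))
             ∪ {(bridgeTail (n+4), bridgeHead (n+4))}

/-! ## Arc sets, chains, chain twists -/

/-- `F` is an arc set of `G`: every pair in `F` is an edge of `G`,
and no arc appears in both orientations. -/
def IsArcSet {V : Type*} (G : SimpleGraph V) (F : Set (V × V)) : Prop :=
  ∀ p ∈ F, G.Adj p.1 p.2 ∧ (p.2, p.1) ∉ F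

/-- A vertex is isolated in an arc set `F` if it is incident to no arc of `F`. -/
def IsIsolatedVtx {V : Type*} (F : Set (V × V)) (v : V) : Prop :=
  ∀ u, (u, v) ∉ F ∧ (v, u) ∉ F

/-- A chain twist of the arc set `F` in `G`: a cycle `c` (at least 3 distinct
vertices, consecutive ones adjacent, indices mod `k`) such that whenever an edge of
the cycle is not a (forward) arc of `F`, the preceding and following edges are. -/
def IsChainTwist {V : Type*} (G : SimpleGraph V) (F : Set (V × V)) {k : ℕ}
    (c : ZMod k → V) : Prop :=
  3 ≤ k ∧ Function.Injective c ∧ (∀ i, G.Adj (c i) (c (i+1))) ∧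
  ∀ i, (c i, c (i+1)) ∉ F → ((c (i-1), c i) ∈ F ∧ (c (i+1), c (i+2)) ∈ F)

/-- `F` contains a chain twist in `G`. -/
def HasChainTwist {V : Type*} (G : SimpleGraph V) (F : Set (V × V)) : Prop :=
  ∃ (k : ℕ) (c : ZMod k → V), IsChainTwist G F c

/-- A chain twist path of the arc set `F` in `G`: a path `c = v_0 v_1 … v_{k-1}`
such that for every interior index `i` (`1 ≤ i`, `i + 1 < k`), if the edge
`(v_i, v_{i+1})` is not an arc of `F`, then `(v_{i-1}, v_i)` is an arc of `F` and
(whenever the index exists) `(v_{i+1}, v_{i+2})` is an arc of `F`. -/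
def IsChainTwistPath {V : Type*} (G : SimpleGraph V) (F : Set (V × V)) {k : ℕ}
    (c : Fin k → V) : Prop :=
  Function.Injective c ∧
  (∀ i : ℕ, ∀ h : i + 1 < k, G.Adj (c ⟨i, by omega⟩) (c ⟨i+1, h⟩)) ∧
  (∀ i : ℕ, 1 ≤ i → ∀ h : i + 1 < k,
    (c ⟨i, by omega⟩, c ⟨i+1, h⟩) ∉ F →
      (c ⟨i-1, by omega⟩, c ⟨i, by omega⟩) ∈ F ∧
      ∀ h2 : i + 2 < k, (c ⟨i+1, by omega⟩, c ⟨i+2, h2⟩) ∈ F)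

/-- A chain of the arc set `F` with `k` arcs: a directed path `c = v_0 → v_1 → … → v_k`
all of whose consecutive pairs are arcs of `F`, which is maximal (no arc of `F` enters
`v_0` and no arc of `F` leaves `v_k`). -/
def IsArcChain {V : Type*} (F : Set (V × V)) {k : ℕ} (c : Fin (k+1) → V) : Prop :=
  Function.Injective c ∧
  (∀ i : ℕ, ∀ h : i + 1 < k + 1, (c ⟨i, by omega⟩, c ⟨i+1, h⟩) ∈ F) ∧
  (∀ u, (u, c 0) ∉ F) ∧ (∀ u, (c (Fin.last k), u) ∉ F)

/-! ## Zero forcing -/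

/-- The zero forcing closure of the initial blue set `S` in the graph `G`:
the set of vertices eventually coloured blue by iterating the colour change rule
"a blue vertex with exactly one white neighbour forces that neighbour". -/
inductive ZFClosure {V : Type*} (G : SimpleGraph V) (S : Set V) : V → Prop
  | init (v : V) (hv : v ∈ S) : ZFClosure G S v
  | force (u v : V) (hu : ZFClosure G S u) (huv : G.Adj u v)
      (h : ∀ w, G.Adj u w → w ≠ v → ZFClosure G S w) : ZFClosure G S v

/-- `S` is a zero forcing set of `G`: iterating the colour change rule starting from
`S` eventually colours every vertex blue. -/
def IsZeroForcingSet {V : Type*} (G : SimpleGraph V) (S : Set V) : Prop :=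
  ∀ v, ZFClosure G S v

/-- The zero forcing number of a finite graph: the minimum size of a zero forcing set. -/
noncomputable def zeroForcingNumber {V : Type*} [Fintype V] (G : SimpleGraph V) : ℕ :=
  sInf {k | ∃ S : Finset V, S.card = k ∧ IsZeroForcingSet G ↑S}

lemma MF.snoc_cons_cons {n} (x y b : Bool) (a : Fin n → Bool) :
    (Fin.snoc (Fin.cons x (Fin.cons y a)) b : Fin (n+3) → Bool)
      = Fin.cons x (Fin.cons y (Fin.snoc a b)) := by
  rw [← Fin.cons_snoc_eq_snoc_cons, ← Fin.cons_snoc_eq_snoc_cons]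

lemma MF.snoc_inj {n} {x y : Fin n → Bool} {b b' : Bool}
    (h : Fin.snoc x b = (Fin.snoc y b' : Fin (n+1) → Bool)) : x = y ∧ b = b' := by
  refine ⟨?_, ?_⟩
  · have := congrArg Fin.init h; simpa using this
  · have := congrFun h (Fin.last n); simpa using this

lemma MF.mem_minF3 (p : (Fin 3 → Bool) × (Fin 3 → Bool)) : p ∈ minF 3 ↔
    p = (oneAt 3 [], oneAt 3 [0]) ∨ p = (oneAt 3 [0], oneAt 3 [0,1]) ∨
    p = (oneAt 3 [2], oneAt 3 [0,2]) ∨ p = (oneAt 3 [0,2], oneAt 3 [0,1,2]) := by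
  simp [minF]

lemma MF.mem_minF4 (n : ℕ) (p : (Fin (n+4) → Bool) × (Fin (n+4) → Bool)) :
    p ∈ minF (n+4) ↔ (∃ b, ∃ q ∈ minF (n+3), p = snocPair q b) ∨
      p = (bridgeTail (n+4), bridgeHead (n+4)) := by
  simp only [minF, Set.mem_union, Set.mem_iUnion, Set.mem_image, Set.mem_singleton_iff]
  constructor
  · rintro (⟨b, q, hq, rfl⟩ | h)
    · exact Or.inl ⟨b, q, hq, rfl⟩
    · exact Or.inr h
  · rintro (⟨b, q, hq, rfl⟩ | h)
    · exact Or.inl ⟨b, q, hq, rfl⟩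
    · exact Or.inr h

lemma MF.init_tail (n : ℕ) : Fin.init (bridgeTail (n+4)) = oneAt (n+3) [1, n+2] := by
  funext i
  have hi := i.isLt
  simp only [Fin.init, bridgeTail, oneAt, Fin.coe_castSucc, List.mem_cons,
    List.not_mem_nil, or_false, decide_eq_decide]
  omega

lemma MF.init_head (n : ℕ) : Fin.init (bridgeHead (n+4)) = oneAt (n+3) [1, n+2] := by
  funext i
  have hi := i.isLt
  simp only [Fin.init, bridgeHead, oneAt, Fin.coe_castSucc, List.mem_cons,
    List.not_mem_nil, or_false, decide_eq_decide]
  omega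

lemma MF.tail_ne_head (n : ℕ) : bridgeTail (n+4) ≠ bridgeHead (n+4) := by
  intro h
  have := congrFun h (Fin.last (n+3))
  simp only [bridgeTail, bridgeHead, oneAt, Fin.val_last, List.mem_cons,
    List.not_mem_nil, or_false, decide_eq_decide] at this
  omega

lemma MF.iso : ∀ n : ℕ, ∀ u : Fin (n+3) → Bool,
    ((u, oneAt (n+3) [1]) ∉ minF (n+3) ∧ (oneAt (n+3) [1], u) ∉ minF (n+3)) ∧
    ((u, oneAt (n+3) [1, n+2]) ∉ minF (n+3) ∧ (oneAt (n+3) [1, n+2], u) ∉ minF (n+3)) := by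
  intro n
  induction n with
  | zero =>
      have : ∀ u : Fin 3 → Bool,
          (((u, oneAt 3 [1]) ∉ minF 3 ∧ (oneAt 3 [1], u) ∉ minF 3) ∧
           ((u, oneAt 3 [1, 2]) ∉ minF 3 ∧ (oneAt 3 [1, 2], u) ∉ minF 3)) := by
        set_option synthInstance.maxSize 2048 in
        intro u
        simp only [MF.mem_minF3, Prod.mk.injEq, not_or, not_and]
        revert u
        decide
      exact this
  | succ n ih =>
      -- sizes: (n+1)+3 = n+4
      intro u
      have initA : Fin.init (oneAt (n+4) [1]) = oneAt (n+3) [1] := rfl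
      have initB : Fin.init (oneAt (n+4) [1, n+3]) = oneAt (n+3) [1] := by
        funext i
        have hi := i.isLt
        simp only [Fin.init, oneAt, Fin.coe_castSucc, List.mem_cons,
          List.not_mem_nil, or_false, decide_eq_decide]
        omega
      have hAt : oneAt (n+4) [1] ≠ bridgeTail (n+4) := by
        intro h
        have := congrFun h ⟨n+2, by omega⟩
        simp only [oneAt, bridgeTail, List.mem_cons, List.not_mem_nil, or_false,
          decide_eq_decide] at this
        omega
      have hAh : oneAt (n+4) [1] ≠ bridgeHead (n+4) := by
        intro h
        have := congrFun h ⟨n+2, by omega⟩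
        simp only [oneAt, bridgeHead, List.mem_cons, List.not_mem_nil, or_false,
          decide_eq_decide] at this
        omega
      have hBt : oneAt (n+4) [1, n+3] ≠ bridgeTail (n+4) := by
        intro h
        have := congrFun h ⟨n+2, by omega⟩
        simp only [oneAt, bridgeTail, List.mem_cons, List.not_mem_nil, or_false,
          decide_eq_decide] at this
        omega
      have hBh : oneAt (n+4) [1, n+3] ≠ bridgeHead (n+4) := by
        intro h
        have := congrFun h ⟨n+2, by omega⟩
        simp only [oneAt, bridgeHead, List.mem_cons, List.not_mem_nil, or_false,
          decide_eq_decide] at this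
        omega
      refine ⟨⟨?_, ?_⟩, ⟨?_, ?_⟩⟩ <;>
        · intro hmem
          rw [MF.mem_minF4] at hmem
          rcases hmem with ⟨b, q, hq, hp⟩ | hp
          · first
            | (have e : oneAt (n+4) [1] = Fin.snoc q.2 b := congrArg Prod.snd hp
               have e2 : q.2 = oneAt (n+3) [1] := by
                 rw [← initA, e, Fin.init_snoc]
               have := (ih q.1).1.1
               rw [← e2, Prod.mk.eta] at this
               exact this hq)
            | (have e : oneAt (n+4) [1] = Fin.snoc q.1 b := congrArg Prod.fst hp
               have e2 : q.1 = oneAt (n+3) [1] := by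
                 rw [← initA, e, Fin.init_snoc]
               have := (ih q.2).1.2
               rw [← e2, Prod.mk.eta] at this
               exact this hq)
            | (have e : oneAt (n+4) [1, n+3] = Fin.snoc q.2 b := congrArg Prod.snd hp
               have e2 : q.2 = oneAt (n+3) [1] := by
                 rw [← initB, e, Fin.init_snoc]
               have := (ih q.1).1.1
               rw [← e2, Prod.mk.eta] at this
               exact this hq)
            | (have e : oneAt (n+4) [1, n+3] = Fin.snoc q.1 b := congrArg Prod.fst hp
               have e2 : q.1 = oneAt (n+3) [1] := by
                 rw [← initB, e, Fin.init_snoc]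
               have := (ih q.2).1.2
               rw [← e2, Prod.mk.eta] at this
               exact this hq)
          · first
            | exact hAh (congrArg Prod.snd hp)
            | exact hAt (congrArg Prod.fst hp)
            | exact hBh (congrArg Prod.snd hp)
            | exact hBt (congrArg Prod.fst hp)

lemma MF.no_into_tail (n : ℕ) (u : Fin (n+4) → Bool) :
    (u, bridgeTail (n+4)) ∉ minF (n+4) := by
  rw [MF.mem_minF4]
  rintro (⟨b, q, hq, hp⟩ | hp)
  · have e : bridgeTail (n+4) = Fin.snoc q.2 b := congrArg Prod.snd hp
    have e2 : q.2 = oneAt (n+3) [1, n+2] := by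
      rw [← MF.init_tail, e, Fin.init_snoc]
    have := (MF.iso n q.1).2.1
    rw [← e2, Prod.mk.eta] at this
    exact this hq
  · exact MF.tail_ne_head n (congrArg Prod.snd hp)

lemma MF.no_outof_head (n : ℕ) (u : Fin (n+4) → Bool) :
    (bridgeHead (n+4), u) ∉ minF (n+4) := by
  rw [MF.mem_minF4]
  rintro (⟨b, q, hq, hp⟩ | hp)
  · have e : bridgeHead (n+4) = Fin.snoc q.1 b := congrArg Prod.fst hp
    have e2 : q.1 = oneAt (n+3) [1, n+2] := by
      rw [← MF.init_head, e, Fin.init_snoc]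
    have := (MF.iso n q.2).2.2
    rw [← e2, Prod.mk.eta] at this
    exact this hq
  · exact MF.tail_ne_head n (congrArg Prod.fst hp).symm

lemma MF.isArcChain_two_iff {V : Type*} (F : Set (V × V)) (c : Fin 3 → V) :
    IsArcChain F (k := 2) c ↔
      Function.Injective c ∧ (c 0, c 1) ∈ F ∧ (c 1, c 2) ∈ F ∧
      (∀ u, (u, c 0) ∉ F) ∧ (∀ u, (c 2, u) ∉ F) := by
  have h2 : (Fin.last 2 : Fin 3) = 2 := rfl
  have e0 : (⟨0, by omega⟩ : Fin 3) = 0 := rfl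
  have e1 : (⟨1, by omega⟩ : Fin 3) = 1 := rfl
  have e2 : (⟨2, by omega⟩ : Fin 3) = 2 := rfl
  constructor
  · rintro ⟨hinj, harc, h0, hl⟩
    refine ⟨hinj, ?_, ?_, h0, ?_⟩
    · have := harc 0 (by omega); rwa [e0, e1] at this
    · have := harc 1 (by omega); rwa [e1, e2] at this
    · rwa [h2] at hl
  · rintro ⟨hinj, h01, h12, h0, hl⟩
    refine ⟨hinj, ?_, h0, ?_⟩
    · intro i h
      match i with
      | 0 => rwa [e0, e1]
      | 1 => rwa [e1, e2]
    · rwa [h2]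

lemma MF.descend {n k : ℕ} (hk : 2 ≤ k) (c : Fin (k+1) → (Fin (n+4) → Bool))
    (hc : IsArcChain (minF (n+4)) c) :
    ∃ (b : Bool) (d : Fin (k+1) → (Fin (n+3) → Bool)),
      IsArcChain (minF (n+3)) d ∧ ∀ i, c i = Fin.snoc (d i) b := by
  obtain ⟨hinj, harc, h0, hlast⟩ := hc
  have e0 : (⟨0, by omega⟩ : Fin (k+1)) = 0 := by ext; simp
  have elast : (⟨k, by omega⟩ : Fin (k+1)) = Fin.last k := rfl
  have snocarc : ∀ i : ℕ, ∀ h : i+1 < k+1, ∃ b q, q ∈ minF (n+3) ∧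
      (c ⟨i, by omega⟩, c ⟨i+1, h⟩) = snocPair q b := by
    intro i h
    have hm := harc i h
    rw [MF.mem_minF4] at hm
    rcases hm with ⟨b, q, hq, hp⟩ | hp
    · exact ⟨b, q, hq, hp⟩
    · exfalso
      match i with
      | 0 =>
        have h2 : c ⟨1, by omega⟩ = bridgeHead (n+4) := congrArg Prod.snd hp
        have harc1 := harc 1 (by omega)
        rw [show c ⟨1, by omega⟩ = bridgeHead (n+4) from h2] at harc1
        exact MF.no_outof_head n _ harc1
      | (j+1) =>
        have h1 : c ⟨j+1, by omega⟩ = bridgeTail (n+4) := congrArg Prod.fst hp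
        have harcj := harc j (by omega)
        rw [show c ⟨j+1, by omega⟩ = bridgeTail (n+4) from h1] at harcj
        exact MF.no_into_tail n _ harcj
  have hbit : ∀ i : ℕ, ∀ h : i < k+1,
      c ⟨i, h⟩ (Fin.last (n+3)) = c 0 (Fin.last (n+3)) := by
    intro i
    induction i with
    | zero => intro h; rw [show (⟨0, h⟩ : Fin (k+1)) = 0 from by ext; simp]
    | succ j ihj =>
      intro h
      obtain ⟨b, q, hq, hp⟩ := snocarc j h
      have e1 : c ⟨j, by omega⟩ = Fin.snoc q.1 b := congrArg Prod.fst hp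
      have e2 : c ⟨j+1, h⟩ = Fin.snoc q.2 b := congrArg Prod.snd hp
      rw [e2, Fin.snoc_last, ← ihj (by omega),
        show c ⟨j, by omega⟩ = Fin.snoc q.1 b from e1, Fin.snoc_last]
  set b : Bool := c 0 (Fin.last (n+3)) with hb
  set d : Fin (k+1) → (Fin (n+3) → Bool) := fun i => Fin.init (c i) with hd
  have hsnoc : ∀ i : Fin (k+1), c i = Fin.snoc (d i) b := by
    intro i
    have : c i (Fin.last (n+3)) = b := hbit i.val i.isLt
    rw [hd, ← this, Fin.snoc_init_self]
  refine ⟨b, d, ⟨?_, ?_, ?_, ?_⟩, hsnoc⟩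
  · intro i j hij
    apply hinj
    rw [hsnoc i, hsnoc j, hij]
  · intro i h
    obtain ⟨b', q, hq, hp⟩ := snocarc i h
    have e1 : c ⟨i, by omega⟩ = Fin.snoc q.1 b' := congrArg Prod.fst hp
    have e2 : c ⟨i+1, h⟩ = Fin.snoc q.2 b' := congrArg Prod.snd hp
    have d1 : d ⟨i, by omega⟩ = q.1 := by
      rw [hd]; simp only []
      rw [show c ⟨i, by omega⟩ = Fin.snoc q.1 b' from e1, Fin.init_snoc]
    have d2 : d ⟨i+1, h⟩ = q.2 := by
      rw [hd]; simp only []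
      rw [e2, Fin.init_snoc]
    rw [show d ⟨i, by omega⟩ = q.1 from d1, d2, Prod.mk.eta]
    exact hq
  · intro u hu
    apply h0 (Fin.snoc u b)
    rw [MF.mem_minF4]
    left
    refine ⟨b, (u, d 0), hu, ?_⟩
    have := hsnoc 0
    exact Prod.ext rfl this
  · intro u hu
    apply hlast (Fin.snoc u b)
    rw [MF.mem_minF4]
    left
    refine ⟨b, (d (Fin.last k), u), hu, ?_⟩
    exact Prod.ext (hsnoc (Fin.last k)) rfl

lemma MF.lift {n k : ℕ} (b : Bool) (d : Fin (k+1) → (Fin (n+3) → Bool))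
    (hd : IsArcChain (minF (n+3)) d)
    (h0 : d 0 ≠ oneAt (n+3) [1, n+2])
    (hl : d (Fin.last k) ≠ oneAt (n+3) [1, n+2]) :
    IsArcChain (minF (n+4)) (fun i => Fin.snoc (d i) b) := by
  obtain ⟨hinj, harc, hin, hout⟩ := hd
  refine ⟨?_, ?_, ?_, ?_⟩
  · intro i j hij
    exact hinj (MF.snoc_inj hij).1
  · intro i h
    rw [MF.mem_minF4]
    left
    exact ⟨b, (d ⟨i, by omega⟩, d ⟨i+1, h⟩), harc i h, rfl⟩
  · intro u hu
    rw [MF.mem_minF4] at hu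
    rcases hu with ⟨b', q, hq, hp⟩ | hp
    · simp only [snocPair, Prod.mk.injEq] at hp
      obtain ⟨-, hp2⟩ := hp
      have : q.2 = d 0 := ((MF.snoc_inj hp2).1).symm
      apply hin q.1
      rw [← this, Prod.mk.eta]
      exact hq
    · simp only [Prod.mk.injEq] at hp
      obtain ⟨-, hp2⟩ := hp
      apply h0
      have := congrArg Fin.init hp2
      rwa [Fin.init_snoc, MF.init_head] at this
  · intro u hu
    rw [MF.mem_minF4] at hu
    rcases hu with ⟨b', q, hq, hp⟩ | hp
    · simp only [snocPair, Prod.mk.injEq] at hp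
      obtain ⟨hp1, -⟩ := hp
      have : q.1 = d (Fin.last k) := ((MF.snoc_inj hp1).1).symm
      apply hout q.2
      rw [← this, Prod.mk.eta]
      exact hq
    · simp only [Prod.mk.injEq] at hp
      obtain ⟨hp1, -⟩ := hp
      apply hl
      have := congrArg Fin.init hp1
      rwa [Fin.init_snoc, MF.init_tail] at this

lemma MF.no3path : ∀ x0 x1 x2 x3 : Fin 3 → Bool,
    ¬((x0,x1) ∈ minF 3 ∧ (x1,x2) ∈ minF 3 ∧ (x2,x3) ∈ minF 3) := by
  simp only [MF.mem_minF3, Prod.mk.injEq]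
  set_option synthInstance.maxSize 2048 in
  decide

lemma MF.base1 : ∀ (k : ℕ) (c : Fin (k+1) → (Fin 3 → Bool)),
    IsArcChain (minF 3) c → k ≤ 2 := by
  intro k c hc
  by_contra hgt
  push_neg at hgt
  obtain ⟨_, harc, _, _⟩ := hc
  exact MF.no3path _ _ _ _ ⟨harc 0 (by omega), harc 1 (by omega), harc 2 (by omega)⟩

lemma MF.base2 : ∀ c : Fin 3 → (Fin 3 → Bool),
    IsArcChain (minF 3) (k := 2) c ↔
      ∃ a : Fin 1 → Bool,
        c 0 = Fin.cons false (Fin.cons false a) ∧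
        c 1 = Fin.cons true (Fin.cons false a) ∧
        c 2 = Fin.cons true (Fin.cons true a) := by
  intro c
  rw [MF.isArcChain_two_iff]
  simp only [MF.mem_minF3, Prod.mk.injEq]
  revert c
  set_option synthInstance.maxSize 4096 in
  set_option maxHeartbeats 1000000 in
  set_option maxRecDepth 100000 in
  decide
/-- For every `n ≥ 3` (written `n = m + 3`), every chain of the arc
set `F_n` of the minority cube contains at most 2 arcs; moreover the chains of length
2 are exactly the directed paths `00a → 10a → 11a`, where `a` ranges over all bit
strings of length `n - 2`. -/
theorem minF_chains_le_two (m : ℕ) :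
    (∀ (k : ℕ) (c : Fin (k+1) → (Fin (m+3) → Bool)),
        IsArcChain (minF (m+3)) c → k ≤ 2) ∧
    (∀ c : Fin 3 → (Fin (m+3) → Bool),
        IsArcChain (minF (m+3)) (k := 2) c ↔
          ∃ a : Fin (m+1) → Bool,
            c 0 = Fin.cons false (Fin.cons false a) ∧
            c 1 = Fin.cons true (Fin.cons false a) ∧
            c 2 = Fin.cons true (Fin.cons true a)) := by
  induction m with
  | zero => exact ⟨MF.base1, MF.base2⟩
  | succ m ih =>
    obtain ⟨ih1, ih2⟩ := ih
    constructor
    · intro k c hc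
      rcases Nat.lt_or_ge k 2 with h | h
      · omega
      · obtain ⟨b, d, hd, -⟩ := MF.descend (n := m) h c hc
        exact ih1 k d hd
    · intro c
      constructor
      · intro hc
        obtain ⟨b, d, hd, hcd⟩ := MF.descend (n := m) (le_refl 2) c hc
        obtain ⟨a, h0, h1, h2⟩ := (ih2 d).mp hd
        refine ⟨Fin.snoc a b, ?_, ?_, ?_⟩
        · rw [hcd 0, h0, MF.snoc_cons_cons]
        · rw [hcd 1, h1, MF.snoc_cons_cons]
        · rw [hcd 2, h2, MF.snoc_cons_cons]
      · rintro ⟨a, h0, h1, h2⟩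
        set b : Bool := a (Fin.last (m+1)) with hbdef
        set a' : Fin (m+1) → Bool := Fin.init a with hadef
        have ha : a = Fin.snoc a' b := (Fin.snoc_init_self a).symm
        set d : Fin 3 → (Fin (m+3) → Bool) :=
          ![Fin.cons false (Fin.cons false a'),
            Fin.cons true (Fin.cons false a'),
            Fin.cons true (Fin.cons true a')] with hddef
        have hd0 : d 0 = Fin.cons false (Fin.cons false a') := rfl
        have hd1 : d 1 = Fin.cons true (Fin.cons false a') := rfl
        have hd2 : d 2 = Fin.cons true (Fin.cons true a') := rfl
        have hd : IsArcChain (minF (m+3)) (k := 2) d :=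
          (ih2 d).mpr ⟨a', hd0, hd1, hd2⟩
        have hne0 : d 0 ≠ oneAt (m+3) [1, m+2] := by
          intro h
          have := congrFun h 1
          rw [hd0, ← Fin.succ_zero_eq_one, Fin.cons_succ, Fin.cons_zero] at this
          simp [oneAt, Fin.succ_zero_eq_one] at this
        have hnel : d (Fin.last 2) ≠ oneAt (m+3) [1, m+2] := by
          intro h
          have := congrFun h 0
          rw [show (Fin.last 2 : Fin 3) = 2 from rfl, hd2, Fin.cons_zero] at this
          simp [oneAt] at this
        have hc' := MF.lift b d hd hne0 hnel
        have hceq : c = fun i => Fin.snoc (d i) b := by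
          funext i
          fin_cases i
          · show c 0 = Fin.snoc (d 0) b
            rw [h0, ha, hd0, MF.snoc_cons_cons]
          · show c 1 = Fin.snoc (d 1) b
            rw [h1, ha, hd1, MF.snoc_cons_cons]
          · show c 2 = Fin.snoc (d 2) b
            rw [h2, ha, hd2, MF.snoc_cons_cons]
        rw [hceq]
        exact hc'
end

section
/- For every integer n ≥ 3, the isolated vertices of the arc set F_n of the minority cube \hat Q_n are exactly the two vertices 01 0^{n-3} 0 and 01 0^{n-3} 1, where 0^{n-3} denotes the all-zero string of length n-3. -/
lemma snoc_oneAt_false {n : ℕ} (s : List ℕ) (h : n ∉ s) :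
    Fin.snoc (oneAt n s) false = oneAt (n+1) s := by
  funext i
  induction i using Fin.lastCases with
  | last => simp [oneAt, h]
  | cast i => simp [oneAt]

lemma snoc_oneAt_true {n : ℕ} (s : List ℕ) :
    Fin.snoc (oneAt n s) true = oneAt (n+1) (s ++ [n]) := by
  funext i
  induction i using Fin.lastCases with
  | last => simp [oneAt]
  | cast i => simp [oneAt, i.isLt.ne]

lemma init_snoc_eq {n : ℕ} (v : Fin (n+1) → Bool) (x : Fin n → Bool)
    (h : v = Fin.snoc x (v (Fin.last n))) : Fin.init v = x := by
  rw [h, Fin.init_snoc]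

/-- For every `n ≥ 3`, the isolated vertices of the arc set `F_n` of
the minority cube `\hat Q_n` are exactly the two vertices `01 0^{n-3} 0` and
`01 0^{n-3} 1` (i.e. the strings with a one exactly at position 1, resp. exactly at
positions 1 and `n-1`). -/
theorem minF_isolated_vertices (n : ℕ) (hn : 3 ≤ n) :
    {v : Fin n → Bool | IsIsolatedVtx (minF n) v} = {oneAt n [1], oneAt n [1, n-1]} := by
  obtain ⟨m, rfl⟩ : ∃ m, n = m + 3 := ⟨n - 3, by omega⟩
  clear hn
  induction m with
  | zero =>
    ext v
    simp only [Set.mem_setOf_eq, Set.mem_insert_iff, Set.mem_singleton_iff, IsIsolatedVtx,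
      minF, Prod.mk.injEq, not_or, not_and]
    revert v
    decide
  | succ m ih =>
    simp only [show m+1+3 = m+4 from rfl, show m+1+3-1 = m+3 from rfl]
    simp only [show m+3-1 = m+2 from rfl] at ih
    -- notation
    set A := oneAt (m+3) [1] with hAdef
    set B := oneAt (m+3) [1, m+2] with hBdef
    have hmem : ∀ p : (Fin (m+4) → Bool) × (Fin (m+4) → Bool), p ∈ minF (m+4) ↔
        (∃ b q, q ∈ minF (m+3) ∧ snocPair q b = p) ∨
        p = (bridgeTail (m+4), bridgeHead (m+4)) := by
      intro p
      show p ∈ (⋃ b : Bool, (fun q => snocPair q b) '' minF (m+3)) ∪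
          {(bridgeTail (m+4), bridgeHead (m+4))} ↔ _
      simp only [Set.mem_union, Set.mem_iUnion, Set.mem_image, Set.mem_singleton_iff,
        Prod.exists]
    have hA : Fin.snoc A false = oneAt (m+4) [1] :=
      snoc_oneAt_false _ (by simp)
    have hA' : Fin.snoc A true = oneAt (m+4) [1, m+3] := snoc_oneAt_true _
    have hB : Fin.snoc B false = bridgeTail (m+4) := by
      have := snoc_oneAt_false (n := m+3) [1, m+2] (by simp)
      simpa [bridgeTail, show m+4-2 = m+2 from rfl] using this
    have hB' : Fin.snoc B true = bridgeHead (m+4) := by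
      have := snoc_oneAt_true (n := m+3) [1, m+2]
      simpa [bridgeHead, show m+4-2 = m+2 from rfl, show m+4-1 = m+3 from rfl] using this
    have hiA : Fin.init (oneAt (m+4) [1]) = A := by rw [← hA, Fin.init_snoc]
    have hiA' : Fin.init (oneAt (m+4) [1, m+3]) = A := by rw [← hA', Fin.init_snoc]
    have hAiso : IsIsolatedVtx (minF (m+3)) A := by
      have : A ∈ {v : Fin (m+3) → Bool | IsIsolatedVtx (minF (m+3)) v} := by
        rw [ih]; left; rfl
      exact this
    have hbridge : (bridgeTail (m+4), bridgeHead (m+4)) ∈ minF (m+4) :=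
      (hmem _).2 (Or.inr rfl)
    -- key inequalities at coordinate m+2
    have hneT : ∀ s : List ℕ, m+2 ∉ s → oneAt (m+4) s ≠ bridgeTail (m+4) := by
      intro s hs h
      have := congrFun h ⟨m+2, by omega⟩
      simp [oneAt, bridgeTail, show m+4-2 = m+2 from rfl, hs] at this
    have hneH : ∀ s : List ℕ, m+2 ∉ s → oneAt (m+4) s ≠ bridgeHead (m+4) := by
      intro s hs h
      have := congrFun h ⟨m+2, by omega⟩
      simp [oneAt, bridgeHead, show m+4-2 = m+2 from rfl, hs] at this
    ext v
    simp only [Set.mem_setOf_eq, Set.mem_insert_iff, Set.mem_singleton_iff]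
    constructor
    · intro hv
      have hinit : IsIsolatedVtx (minF (m+3)) (Fin.init v) := by
        intro u
        constructor
        · intro hu
          refine (hv (Fin.snoc u (v (Fin.last (m+3))))).1 ?_
          refine (hmem _).2 (Or.inl ⟨v (Fin.last (m+3)), (u, Fin.init v), hu, ?_⟩)
          simp [snocPair, Fin.snoc_init_self]
        · intro hu
          refine (hv (Fin.snoc u (v (Fin.last (m+3))))).2 ?_
          refine (hmem _).2 (Or.inl ⟨v (Fin.last (m+3)), (Fin.init v, u), hu, ?_⟩)
          simp [snocPair, Fin.snoc_init_self]
      have hv2 : Fin.init v = A ∨ Fin.init v = B := by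
        have : Fin.init v ∈ {w : Fin (m+3) → Bool | IsIsolatedVtx (minF (m+3)) w} := hinit
        rw [ih] at this
        exact this
      have hvsnoc : v = Fin.snoc (Fin.init v) (v (Fin.last (m+3))) :=
        (Fin.snoc_init_self v).symm
      rcases hv2 with h2 | h2 <;> rw [h2] at hvsnoc <;>
        rcases hb : v (Fin.last (m+3)) with _ | _ <;> rw [hb] at hvsnoc
      · left; rw [hvsnoc, hA]
      · right; rw [hvsnoc, hA']
      · exfalso
        rw [hvsnoc, hB] at hv
        exact (hv (bridgeHead (m+4))).2 hbridge
      · exfalso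
        rw [hvsnoc, hB'] at hv
        exact (hv (bridgeTail (m+4))).1 hbridge
    · intro hv u
      constructor
      · intro hu
        rcases (hmem _).1 hu with ⟨b, q, hq, hsp⟩ | heq
        · have hv2 : v = Fin.snoc q.2 b := by
            have := congrArg Prod.snd hsp
            simpa [snocPair] using this.symm
          have hinit : Fin.init v = q.2 := by rw [hv2, Fin.init_snoc]
          have : (q.1, Fin.init v) ∈ minF (m+3) := by rw [hinit]; exact hq
          rcases hv with rfl | rfl
          · exact (hAiso q.1).1 (by rwa [hiA] at this)
          · exact (hAiso q.1).1 (by rwa [hiA'] at this)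
        · have hv2 : v = bridgeHead (m+4) := congrArg Prod.snd heq
          rcases hv with rfl | rfl
          · exact hneH [1] (by simp) hv2
          · exact hneH [1, m+3] (by simp) hv2
      · intro hu
        rcases (hmem _).1 hu with ⟨b, q, hq, hsp⟩ | heq
        · have hv2 : v = Fin.snoc q.1 b := by
            have := congrArg Prod.fst hsp
            simpa [snocPair] using this.symm
          have hinit : Fin.init v = q.1 := by rw [hv2, Fin.init_snoc]
          have : (Fin.init v, q.2) ∈ minF (m+3) := by rw [hinit]; exact hq
          rcases hv with rfl | rfl
          · exact (hAiso q.2).2 (by rwa [hiA] at this)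
          · exact (hAiso q.2).2 (by rwa [hiA'] at this)
        · have hv2 : v = bridgeTail (m+4) := congrArg Prod.fst heq
          rcases hv with rfl | rfl
          · exact hneT [1] (by simp) hv2
          · exact hneT [1, m+3] (by simp) hv2
end

section
/- Let G and H be finite simple graphs and let F be an arc set of G containing no chain twist. Define the arc set F^□ of the Cartesian product G □ H by: ((v,u),(w,u')) ∈ F^□ if and only if u = u' and (v,w) ∈ F. Then F^□ is an arc set of G □ H containing no chain twist, and |F^□| = |F| · |V(H)|. -/
/-- The arc set `F^□` of the Cartesian product `G □ H` induced by an arc set `F` of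
`G`: a copy of `F` inside each copy of `G`. -/
def boxArcs {α β : Type*} (F : Set (α × α)) : Set ((α × β) × (α × β)) :=
  {p | p.1.2 = p.2.2 ∧ (p.1.1, p.2.1) ∈ F}

/-!
Project a chain twist of `F^□` in `G □ H` to `G`. Its `H`-steps become pauses; a pause is never an
arc of `F^□`, so both neighbouring steps are arcs of `F`. The projection is therefore a closed walk
in `G` that may pause but never backtracks, and it satisfies the chain-twist condition at every
step. Such a walk contains a chain twist of `F`: cut it at a shortest return `w p = w (p + d)`. If
one of the two seam steps of the loop `w p, …, w (p + d)` is an arc, the loop is a chain twist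
(minimality makes it a cycle). Otherwise the steps just outside the loop are arcs, and the
complementary closed walk is a shorter walk of the same kind.
-/

open Function

section Periodic

variable {V : Type*}

theorem Function.Periodic.apply_emod {u : ℤ → V} {m : ℤ} (hu : Periodic u m)
    (j : ℤ) : u (j % m) = u j := by
  rw [Int.emod_def, mul_comm, ← smul_eq_mul, hu.sub_zsmul_eq]

theorem Function.Periodic.forall_of_forall_Ico {P : ℤ → Prop} {m : ℤ} (hP : Periodic P m)
    (hm : 0 < m) (h : ∀ j, 0 ≤ j → j < m → P j) (j : ℤ) : P j :=
  hP.apply_emod j ▸ h _ (Int.emod_nonneg j hm.ne') (Int.emod_lt_of_pos j hm)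

theorem exists_periodic_eqOn_Icc {w : ℤ → V} {s : ℤ} {m : ℕ} (hwrap : w (s + m) = w s) :
    ∃ u : ℤ → V, Periodic u m ∧ ∀ j : ℤ, 0 ≤ j → j ≤ m → u j = w (s + j) := by
  refine ⟨fun j => w (s + j % m), fun j => by simp, fun j h0 h1 => ?_⟩
  rcases h1.lt_or_eq with h1 | rfl
  · simp [Int.emod_eq_of_lt h0 h1]
  · simp [hwrap]

theorem Function.Periodic.exists_minimal_return {w : ℤ → V} {n : ℕ} (hn : 0 < n)
    (hper : Periodic w n) : ∃ d : ℕ, ∃ p : ℤ, 0 < d ∧ d ≤ n ∧ w (p + d) = w p ∧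
      ∀ q e : ℤ, 0 < e → e < d → w (q + e) ≠ w q := by
  classical
  have hex : ∃ d : ℕ, 0 < d ∧ ∃ p : ℤ, w (p + d) = w p := ⟨n, hn, 0, hper 0⟩
  obtain ⟨hd, p, hp⟩ := Nat.find_spec hex
  refine ⟨Nat.find hex, p, hd, Nat.find_min' hex ⟨hn, 0, hper 0⟩, hp, fun q e he hed h => ?_⟩
  lift e to ℕ using he.le
  exact Nat.find_min hex (Nat.cast_lt.mp hed) ⟨Nat.cast_pos.mp he, q, h⟩

end Periodic

section LazyWalk

variable {V : Type*} {G : SimpleGraph V} {F : Set (V × V)}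

theorem IsArcSet.ne (hF : IsArcSet G F) {a b : V} (h : (a, b) ∈ F) : a ≠ b :=
  (hF _ h).1.ne

theorem IsArcSet.swap_notMem (hF : IsArcSet G F) {a b : V} (h : (a, b) ∈ F) : (b, a) ∉ F :=
  (hF _ h).2

/-- `w` may pause (`w i = w (i + 1)`); closed walks are indexed by `ZMod k`, or periodically by
`ℤ`. -/
structure IsLazyTwistedWalk {ι : Type*} [CommRing ι] (G : SimpleGraph V) (F : Set (V × V))
    (w : ι → V) : Prop where
  eq_or_adj : ∀ i, w i = w (i + 1) ∨ G.Adj (w i) (w (i + 1))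
  twist : ∀ i, (w i, w (i + 1)) ∉ F → (w (i - 1), w i) ∈ F ∧ (w (i + 1), w (i + 2)) ∈ F

theorem IsChainTwist.isLazyTwistedWalk {k : ℕ} {c : ZMod k → V} (hc : IsChainTwist G F c) :
    IsLazyTwistedWalk G F c :=
  ⟨fun i => Or.inr (hc.2.2.1 i), hc.2.2.2⟩

theorem IsChainTwist.sub_one_ne_add_one {k : ℕ} {c : ZMod k → V} (hc : IsChainTwist G F c)
    (x : ZMod k) : c (x - 1) ≠ c (x + 1) := by
  intro h
  have h2 : ((2 : ℕ) : ZMod k) = 0 := by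
    have := hc.2.1 h
    push_cast
    linear_combination -this
  have := Nat.le_of_dvd two_pos ((ZMod.natCast_eq_zero_iff 2 k).mp h2)
  have := hc.1
  omega

theorem IsLazyTwistedWalk.isChainTwist {k : ℕ} {c : ZMod k → V} (hk : 3 ≤ k)
    (hinj : Injective c) (hc : IsLazyTwistedWalk G F c) : IsChainTwist G F c := by
  have : Nontrivial (ZMod k) := ZMod.nontrivial_iff.mpr (by omega)
  refine ⟨hk, hinj, fun i => (hc.eq_or_adj i).resolve_left fun h => ?_, hc.twist⟩
  simpa using hinj h

theorem isLazyTwistedWalk_comp_intCast_iff {k : ℕ} {c : ZMod k → V} :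
    IsLazyTwistedWalk G F (c ∘ Int.cast) ↔ IsLazyTwistedWalk G F c := by
  refine ⟨fun h => ⟨fun x => ?_, fun x => ?_⟩, fun h => ⟨fun i => ?_, fun i => ?_⟩⟩
  · obtain ⟨i, rfl⟩ := ZMod.intCast_surjective x
    simpa using h.eq_or_adj i
  · obtain ⟨i, rfl⟩ := ZMod.intCast_surjective x
    simpa using h.twist i
  · simpa using h.eq_or_adj (i : ZMod k)
  · simpa using h.twist (i : ZMod k)

theorem hasChainTwist_of_injOn_Ico {u : ℤ → V} {d : ℕ} (hd : 3 ≤ d) (hu : Periodic u d)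
    (hinj : Set.InjOn u (Set.Ico 0 d)) (hw : IsLazyTwistedWalk G F u) : HasChainTwist G F := by
  have : NeZero d := ⟨by omega⟩
  have hval : (fun x : ZMod d => u x.val) ∘ Int.cast = u := by
    funext i
    exact (congrArg u (ZMod.val_intCast i)).trans (hu.apply_emod i)
  refine ⟨d, fun x => u x.val, IsLazyTwistedWalk.isChainTwist hd (fun x y hxy => ?_) ?_⟩
  · have hlt : ∀ z : ZMod d, (z.val : ℤ) ∈ Set.Ico 0 (d : ℤ) := fun z =>
      ⟨Nat.cast_nonneg _, Nat.cast_lt.mpr (ZMod.val_lt z)⟩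
    exact ZMod.val_injective d (Nat.cast_injective (hinj (hlt x) (hlt y) hxy))
  · rw [← isLazyTwistedWalk_comp_intCast_iff, hval]
    exact hw

section Window

-- `u` runs along the closed segment `w s, …, w (s + m) = w s` of `w` and starts over.
variable {w u : ℤ → V} {s : ℤ} {m : ℕ}

theorem apply_add_eq_of_periodic_eqOn_Icc (hu : Periodic u m)
    (huw : ∀ j : ℤ, 0 ≤ j → j ≤ m → u j = w (s + j)) : w (s + m) = w s := by
  rw [← huw m (Nat.cast_nonneg m) le_rfl, hu.eq, huw 0 le_rfl (Nat.cast_nonneg m), add_zero]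

theorem IsLazyTwistedWalk.of_periodic_eqOn_Icc (hw : IsLazyTwistedWalk G F w) (hm : 2 ≤ m)
    (hu : Periodic u m) (huw : ∀ j : ℤ, 0 ≤ j → j ≤ m → u j = w (s + j))
    (hseam : (w s, w (s + 1)) ∈ F ∨ (w (s + m - 1), w (s + m)) ∈ F) :
    IsLazyTwistedWalk G F u where
  eq_or_adj := by
    refine Periodic.forall_of_forall_Ico (m := m) (fun j => ?_) (by omega) fun j h0 h1 => ?_
    · simp only [add_right_comm _ (m : ℤ), hu _]
    rw [huw j h0 h1.le, huw (j + 1) (by omega) (by omega), ← add_assoc]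
    exact hw.eq_or_adj _
  twist := by
    refine Periodic.forall_of_forall_Ico (m := m) (fun j => ?_) (by omega) fun j h0 h1 => ?_
    · simp only [add_right_comm _ (m : ℤ), add_sub_right_comm _ (m : ℤ), hu _]
    have hwrap := apply_add_eq_of_periodic_eqOn_Icc hu huw
    rw [huw j h0 h1.le, huw (j + 1) (by omega) (by omega), ← add_assoc]
    intro hstep
    obtain ⟨hprev, hnext⟩ := hw.twist _ hstep
    constructor
    · rcases eq_or_ne j 0 with rfl | hj
      · rw [add_zero] at hstep
        convert hseam.resolve_left hstep using 2
        · rw [← hu, huw _ (by omega) (by omega)]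
          ring_nf
        · rw [add_zero, hwrap]
      · rwa [huw _ (by omega) (by omega), ← add_sub_assoc]
    · rcases eq_or_ne j (m - 1) with rfl | hj
      · rw [← add_sub_assoc, sub_add_cancel] at hstep
        convert hseam.resolve_right hstep using 2
        · rw [← add_sub_assoc, sub_add_cancel, hwrap]
        · rw [show (m : ℤ) - 1 + 2 = 1 + m by ring, hu, huw _ (by omega) (by omega)]
      · rwa [huw _ (by omega) (by omega), ← add_assoc]

theorem nonbacktracking_of_periodic_eqOn_Icc (hF : IsArcSet G F)
    (hnb : ∀ i, w (i - 1) ≠ w (i + 1)) (hm : 2 ≤ m) (hu : Periodic u m)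
    (huw : ∀ j : ℤ, 0 ≤ j → j ≤ m → u j = w (s + j)) (hfirst : (w s, w (s + 1)) ∈ F)
    (hlast : (w (s + m - 1), w (s + m)) ∈ F) : ∀ j, u (j - 1) ≠ u (j + 1) := by
  refine Periodic.forall_of_forall_Ico (m := m) (fun j => ?_) (by omega) fun j h0 h1 => ?_
  · simp only [add_right_comm _ (m : ℤ), add_sub_right_comm _ (m : ℤ), hu _]
  rw [huw (j + 1) (by omega) (by omega)]
  rcases eq_or_ne j 0 with rfl | hj
  · rw [zero_sub, ← hu, neg_add_eq_sub, huw _ (by omega) (by omega), zero_add]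
    intro h
    rw [apply_add_eq_of_periodic_eqOn_Icc hu huw, add_sub_assoc, h] at hlast
    exact hF.swap_notMem hfirst hlast
  · rw [huw _ (by omega) (by omega), ← add_sub_assoc, ← add_assoc]
    exact hnb _

end Window

theorem IsLazyTwistedWalk.hasChainTwist (hF : IsArcSet G F) {n : ℕ} {w : ℤ → V} (hn : 0 < n)
    (hper : Periodic w n) (hw : IsLazyTwistedWalk G F w) (hnb : ∀ i, w (i - 1) ≠ w (i + 1)) :
    HasChainTwist G F := by
  induction n using Nat.strong_induction_on generalizing w with
  | _ n ih =>
  obtain ⟨d, p, hd0, hdn, hp, hmin⟩ := hper.exists_minimal_return hn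
  by_cases hseam : (w p, w (p + 1)) ∈ F ∨ (w (p + d - 1), w (p + d)) ∈ F
  · have hd1 : d ≠ 1 := by
      rintro rfl
      rw [Nat.cast_one] at hp hseam
      rw [add_sub_cancel_right, hp, or_self] at hseam
      exact hF.ne hseam rfl
    have hd2 : d ≠ 2 := by
      rintro rfl
      exact hnb (p + 1) (by rw [add_sub_cancel_right, add_assoc]; exact hp.symm)
    obtain ⟨u, hu, huw⟩ := exists_periodic_eqOn_Icc hp
    refine hasChainTwist_of_injOn_Ico (by omega) hu (fun a ha b hb hab => ?_)
      (hw.of_periodic_eqOn_Icc (by omega) hu huw hseam)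
    rw [huw a ha.1 ha.2.le, huw b hb.1 hb.2.le] at hab
    by_contra hne
    rcases lt_or_gt_of_ne hne with h | h
    · exact hmin (p + a) (b - a) (by omega) (by have := ha.1; have := hb.2; omega)
        (by rw [add_assoc, add_sub_cancel]; exact hab.symm)
    · exact hmin (p + b) (a - b) (by omega) (by have := hb.1; have := ha.2; omega)
        (by rw [add_assoc, add_sub_cancel]; exact hab)
  · obtain ⟨hfirst, hlast⟩ := not_or.mp hseam
    obtain ⟨hbefore, -⟩ := hw.twist p hfirst
    obtain ⟨-, hafter⟩ := hw.twist (p + d - 1) (by rwa [sub_add_cancel])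
    rw [sub_add_cancel, show p + d - 1 + 2 = p + d + 1 by ring] at hafter
    have hdn : d < n := hdn.lt_of_ne fun h => hlast (by
      rw [h, add_sub_right_comm, hper, hper]
      exact hbefore)
    have hcast : ((n - d : ℕ) : ℤ) = n - d := Nat.cast_sub hdn.le
    have hwrap : w (p + d + (n - d : ℕ)) = w (p + d) := by
      rw [hcast, add_add_sub_cancel, hper, hp]
    have hm : 2 ≤ n - d := by
      by_contra hm
      rw [show n - d = 1 by omega, Nat.cast_one] at hwrap
      exact hF.ne hafter hwrap.symm
    have hbefore' : (w (p + d + (n - d : ℕ) - 1), w (p + d + (n - d : ℕ))) ∈ F := by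
      rwa [hcast, add_add_sub_cancel, add_sub_right_comm, hper, hper]
    obtain ⟨u, hu, huw⟩ := exists_periodic_eqOn_Icc hwrap
    exact ih (n - d) (by omega) (by omega) hu
      (hw.of_periodic_eqOn_Icc hm hu huw (.inl hafter))
      (nonbacktracking_of_periodic_eqOn_Icc hF hnb hm hu huw hafter hbefore')

end LazyWalk

section BoxProduct

variable {α β : Type*} {G : SimpleGraph α} {H : SimpleGraph β} {F : Set (α × α)}

theorem IsArcSet.boxProd (hF : IsArcSet G F) (H : SimpleGraph β) :
    IsArcSet (G □ H) (boxArcs (β := β) F) := by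
  rintro ⟨⟨a, x⟩, ⟨b, y⟩⟩ ⟨hxy, hab⟩
  dsimp only at hxy hab
  subst hxy
  exact ⟨SimpleGraph.boxProd_adj.mpr (.inl ⟨(hF _ hab).1, rfl⟩), fun h => hF.swap_notMem hab h.2⟩

theorem ncard_boxArcs (F : Set (α × α)) : (boxArcs (β := β) F).ncard = F.ncard * Nat.card β := by
  have himage : boxArcs (β := β) F =
      (fun q : (α × α) × β => ((q.1.1, q.2), (q.1.2, q.2))) '' (F ×ˢ Set.univ) := by
    ext ⟨⟨a, x⟩, ⟨b, y⟩⟩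
    simp [boxArcs, and_comm]
  have hinj : Injective fun q : (α × α) × β => ((q.1.1, q.2), (q.1.2, q.2)) := by
    rintro ⟨⟨a, b⟩, x⟩ ⟨⟨a', b'⟩, x'⟩ h
    simp_all
  rw [himage, Set.ncard_image_of_injective _ hinj, Set.ncard_prod, Set.ncard_univ]

theorem IsLazyTwistedWalk.fst_of_boxArcs {ι : Type*} [CommRing ι] {c : ι → α × β}
    (hc : IsLazyTwistedWalk (G □ H) (boxArcs F) c) : IsLazyTwistedWalk G F (Prod.fst ∘ c) where
  eq_or_adj i := by
    rcases hc.eq_or_adj i with h | h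
    · exact .inl (congrArg Prod.fst h)
    · rcases SimpleGraph.boxProd_adj.mp h with ⟨hG, -⟩ | ⟨-, h1⟩
      · exact .inr hG
      · exact .inl h1
  twist i h := by
    obtain ⟨h1, h2⟩ := hc.twist i fun hi => h hi.2
    exact ⟨h1.2, h2.2⟩

theorem IsChainTwist.fst_sub_one_ne_fst_add_one (hF : IsArcSet G F) {k : ℕ}
    {c : ZMod k → α × β} (hc : IsChainTwist (G □ H) (boxArcs F) c) (x : ZMod k) :
    (c (x - 1)).1 ≠ (c (x + 1)).1 := by
  intro hfst
  have hsnd : (c (x - 1)).2 ≠ (c (x + 1)).2 := fun h => hc.sub_one_ne_add_one x (Prod.ext hfst h)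
  have hprev := hc.2.2.1 (x - 1)
  rw [sub_add_cancel] at hprev
  rcases SimpleGraph.boxProd_adj.mp hprev with ⟨-, e1⟩ | ⟨hH1, e1⟩
  · rcases SimpleGraph.boxProd_adj.mp (hc.2.2.1 x) with ⟨-, e2⟩ | ⟨hH2, e2⟩
    · exact hsnd (e1.trans e2)
    · have := (hc.2.2.2 x fun h => hH2.ne h.1).1
      exact hF.ne this.2 (hfst.trans e2.symm)
  · have := (hc.2.2.2 (x - 1) (by rw [sub_add_cancel]; exact fun h => hH1.ne h.1)).2
    rw [sub_add_cancel, show x - 1 + 2 = x + 1 by ring] at this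
    exact hF.ne this.2 (e1.symm.trans hfst)

theorem HasChainTwist.of_boxArcs (hF : IsArcSet G F)
    (h : HasChainTwist (G □ H) (boxArcs F)) : HasChainTwist G F := by
  obtain ⟨k, c, hc⟩ := h
  have hw := isLazyTwistedWalk_comp_intCast_iff.mpr hc.isLazyTwistedWalk.fst_of_boxArcs
  exact hw.hasChainTwist hF (n := k) (by have := hc.1; omega) (fun i => by simp)
    fun i => by simpa using hc.fst_sub_one_ne_fst_add_one hF i

end BoxProduct

theorem boxArcs_arc_set_no_chain_twist_general {α β : Type*} [Fintype β]
    (G : SimpleGraph α) (H : SimpleGraph β) (F : Set (α × α))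
    (hF : IsArcSet G F) (hct : ¬ HasChainTwist G F) :
    IsArcSet (G.boxProd H) (boxArcs (β := β) F) ∧
    ¬ HasChainTwist (G.boxProd H) (boxArcs (β := β) F) ∧
    (boxArcs (β := β) F).ncard = F.ncard * Fintype.card β :=
  ⟨hF.boxProd H, fun h => hct (h.of_boxArcs hF), by
    rw [ncard_boxArcs, Nat.card_eq_fintype_card]⟩

/-- Let `G`, `H` be finite simple graphs and `F` an arc set of `G`
with no chain twist. Then `F^□` is an arc set of `G □ H` with no chain twist, and
`|F^□| = |F| ⬝ |V(H)|`. -/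
theorem boxArcs_arc_set_no_chain_twist {α β : Type*} [Fintype α] [Fintype β]
    (G : SimpleGraph α) (H : SimpleGraph β) (F : Set (α × α))
    (hF : IsArcSet G F) (hct : ¬ HasChainTwist G F) :
    IsArcSet (G.boxProd H) (boxArcs (β := β) F) ∧
    ¬ HasChainTwist (G.boxProd H) (boxArcs (β := β) F) ∧
    (boxArcs (β := β) F).ncard = F.ncard * Fintype.card β :=
  boxArcs_arc_set_no_chain_twist_general G H F hF hct
end

section
/- For finite simple graphs G and H, the zero forcing number of the Cartesian product satisfies Z(G □ H) ≤ min{ Z(G)·|V(H)|, Z(H)·|V(G)| }. -/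
lemma zf_box_left {α β : Type*} (G : SimpleGraph α) (H : SimpleGraph β) (S : Set α)
    (hS : IsZeroForcingSet G S) :
    IsZeroForcingSet (G.boxProd H) {p | p.1 ∈ S} := by
  have key : ∀ a, ZFClosure G S a →
      ∀ b, ZFClosure (G.boxProd H) {p : α × β | p.1 ∈ S} (a, b) := by
    intro a ha
    induction ha with
    | init v hv => exact fun b => ZFClosure.init _ hv
    | force u v hu huv h ih1 ih2 =>
      intro b
      refine ZFClosure.force (u, b) (v, b) (ih1 b) (Or.inl ⟨huv, rfl⟩) ?_
      rintro ⟨w1, w2⟩ hw hne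
      rcases hw with ⟨hadj, heq⟩ | ⟨hadj, heq⟩
      · dsimp at heq; subst heq
        by_cases hwv : w1 = v
        · exact absurd (by rw [hwv]) hne
        · exact ih2 w1 hadj hwv b
      · dsimp at heq; subst heq
        exact ih1 w2
  exact fun p => key p.1 (hS p.1) p.2

lemma zf_box_right {α β : Type*} (G : SimpleGraph α) (H : SimpleGraph β) (S : Set β)
    (hS : IsZeroForcingSet H S) :
    IsZeroForcingSet (G.boxProd H) {p | p.2 ∈ S} := by
  have key : ∀ b, ZFClosure H S b →
      ∀ a, ZFClosure (G.boxProd H) {p : α × β | p.2 ∈ S} (a, b) := by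
    intro b hb
    induction hb with
    | init v hv => exact fun a => ZFClosure.init _ hv
    | force u v hu huv h ih1 ih2 =>
      intro a
      refine ZFClosure.force (a, u) (a, v) (ih1 a) (Or.inr ⟨huv, rfl⟩) ?_
      rintro ⟨w1, w2⟩ hw hne
      rcases hw with ⟨hadj, heq⟩ | ⟨hadj, heq⟩
      · dsimp at heq; subst heq
        exact ih1 w1
      · dsimp at heq; subst heq
        by_cases hwv : w2 = v
        · exact absurd (by rw [hwv]) hne
        · exact ih2 w2 hadj hwv a
  exact fun p => key p.2 (hS p.2) p.1

lemma zf_set_nonempty {V : Type*} [Fintype V] (G : SimpleGraph V) :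
    {k | ∃ S : Finset V, S.card = k ∧ IsZeroForcingSet G ↑S}.Nonempty :=
  ⟨Finset.univ.card, Finset.univ, rfl, fun v => ZFClosure.init v (by simp)⟩

/-- For finite simple graphs `G` and `H`, the zero forcing number of
the Cartesian product satisfies `Z(G □ H) ≤ min (Z(G)·|V(H)|) (Z(H)·|V(G)|)`. -/
theorem zeroForcingNumber_boxProd_le {α β : Type*} [Fintype α] [Fintype β]
    (G : SimpleGraph α) (H : SimpleGraph β) :
    zeroForcingNumber (G.boxProd H) ≤
      min (zeroForcingNumber G * Fintype.card β)
          (zeroForcingNumber H * Fintype.card α) := by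
  have hG := Nat.sInf_mem (zf_set_nonempty G)
  have hH := Nat.sInf_mem (zf_set_nonempty H)
  obtain ⟨S, hScard, hSzf⟩ := hG
  obtain ⟨T, hTcard, hTzf⟩ := hH
  refine le_min ?_ ?_
  · apply Nat.sInf_le
    refine ⟨S ×ˢ Finset.univ, ?_, ?_⟩
    · rw [Finset.card_product, hScard, Finset.card_univ]; rfl
    · have h := zf_box_left G H (↑S) hSzf
      have hset : (↑(S ×ˢ (Finset.univ : Finset β)) : Set (α × β))
          = {p | p.1 ∈ (↑S : Set α)} := by
        ext p; simp
      rw [hset]; exact h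
  · apply Nat.sInf_le
    refine ⟨Finset.univ ×ˢ T, ?_, ?_⟩
    · rw [Finset.card_product, hTcard, Finset.card_univ, mul_comm]; rfl
    · have h := zf_box_right G H (↑T) hTzf
      have hset : (↑((Finset.univ : Finset α) ×ˢ T) : Set (α × β))
          = {p | p.2 ∈ (↑T : Set β)} := by
        ext p; simp
      rw [hset]; exact h
end

section
/- For every integer n ≥ 3, no arc (u,v) of the arc set F_n of the minority cube \hat Q_n has a tail u whose label begins with the two bits 11. -/
lemma key : ∀ n, ∀ u v : Fin n → Bool, (u, v) ∈ minF n → ∀ (h1 : 1 < n),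
    ¬ (u ⟨0, by omega⟩ = true ∧ u ⟨1, by omega⟩ = true) := by
  intro n
  induction n using Nat.strong_induction_on with
  | _ n ih =>
    match n with
    | 0 => intro u v h; exact absurd h (by simp [minF])
    | 1 => intro u v h; exact absurd h (by simp [minF])
    | 2 => intro u v h; exact absurd h (by simp [minF])
    | 3 =>
      intro u v h h1
      simp only [minF, Set.mem_insert_iff, Set.mem_singleton_iff, Prod.mk.injEq] at h
      rcases h with ⟨hu, _⟩ | ⟨hu, _⟩ | ⟨hu, _⟩ | ⟨hu, _⟩ <;>
        subst hu <;> simp [oneAt]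
    | (m+4) =>
      intro u v h h1
      rcases h with h | h
      · simp only [Set.mem_iUnion, Set.mem_image] at h
        obtain ⟨b, p, hp, heq⟩ := h
        have hu : u = Fin.snoc p.1 b := by
          have := congrArg Prod.fst heq; simpa [snocPair] using this.symm
        subst hu
        have h0 : (⟨0, by omega⟩ : Fin (m+4)) = Fin.castSucc ⟨0, by omega⟩ := rfl
        have h1' : (⟨1, by omega⟩ : Fin (m+4)) = Fin.castSucc ⟨1, by omega⟩ := rfl
        rw [h0, h1', Fin.snoc_castSucc, Fin.snoc_castSucc]
        exact ih (m+3) (by omega) p.1 p.2 hp (by omega)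
      · simp only [Set.mem_singleton_iff, Prod.mk.injEq] at h
        have hu : u = bridgeTail (m+4) := h.1
        subst hu
        simp [bridgeTail, oneAt]

/-- For every `n ≥ 3`, no arc `(u, v)` of the arc set `F_n` of the
minority cube `\hat Q_n` has a tail `u` whose label begins with the two bits `11`. -/
theorem minF_no_11_tail (n : ℕ) (hn : 3 ≤ n) (u v : Fin n → Bool)
    (h : (u, v) ∈ minF n) :
    ¬ (u ⟨0, by omega⟩ = true ∧ u ⟨1, by omega⟩ = true) := by
  exact key n u v h (by omega)
end
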